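/- arXiv:1305.0470 — 5 statements merged into one kernel-verified Lean document; each statement's English description precedes it below -/
import Mathlib

section
/- Let n ≥ 3 and let u be a choreography in X⁽ⁿ⁾ with symmetry group G ≤ Γ × Ŝ¹ (the stabilizer of u). Then ker τ ∩ ker ρ and ker τ ∩ ker σ are trivial. Concretely: if (I, σ, 0) ∈ G for some σ ∈ Sₙ, then σ = e; and if (A, e, 0) ∈ G for some A ∈ O(2), then A = I. -/
/-! An element `(I, σ, 0)` of the symmetry group fixes each configuration `u t`, which has
distinct entries, so `σ = e`. An element `(A, e, 0)` with `A ≠ I` fixes every body, so all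
bodies stay on the fixed line `ℝ v` of `A`. Writing `x t = ⟪v, u t 0⟫`, the choreography relation
`u t 1 = u (t + 1/n) 0` and the absence of collisions make `t ↦ x (t + 1/n) - x t` a continuous
function without zeros, hence of constant sign; but its values at `t = k/n` telescope to `0`. -/

noncomputable section

open Complex

/-- The time circle `𝕋 = ℝ/ℤ`. -/
abbrev TimeCircle : Type := AddCircle (1 : ℝ)

/-- The group `Ŝ¹` of rotations and reflections of the time circle: the element
`⟨θ, false⟩` is the rotation `t ↦ θ + t` and `⟨θ, true⟩` is the reflection `t ↦ θ - t`. -/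
@[ext] structure TimeSym : Type where
  shift : TimeCircle
  rev : Bool

namespace TimeSym

/-- The action of an element of `Ŝ¹` on the time circle. -/
def act (g : TimeSym) (t : TimeCircle) : TimeCircle :=
  g.shift + (if g.rev then -t else t)

instance : One TimeSym := ⟨⟨0, false⟩⟩
instance : Mul TimeSym :=
  ⟨fun g h => ⟨g.shift + (if g.rev then -h.shift else h.shift), xor g.rev h.rev⟩⟩
instance : Inv TimeSym := ⟨fun g => ⟨if g.rev then g.shift else -g.shift, g.rev⟩⟩

@[simp] lemma one_shift : (1 : TimeSym).shift = 0 := rfl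
@[simp] lemma one_rev : (1 : TimeSym).rev = false := rfl
@[simp] lemma mul_shift (g h : TimeSym) :
    (g * h).shift = g.shift + (if g.rev then -h.shift else h.shift) := rfl
@[simp] lemma mul_rev (g h : TimeSym) : (g * h).rev = xor g.rev h.rev := rfl
@[simp] lemma inv_shift (g : TimeSym) :
    g⁻¹.shift = if g.rev then g.shift else -g.shift := rfl
@[simp] lemma inv_rev (g : TimeSym) : g⁻¹.rev = g.rev := rfl

instance : Group TimeSym where
  mul_assoc a b c := by
    obtain ⟨sa, ra⟩ := a; obtain ⟨sb, rb⟩ := b; obtain ⟨sc, rc⟩ := c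
    ext
    · simp only [mul_shift, mul_rev]
      cases ra <;> cases rb <;> simp <;> abel
    · simp [Bool.xor_assoc]
  one_mul a := by ext <;> simp
  mul_one a := by obtain ⟨sa, ra⟩ := a; ext <;> cases ra <;> simp
  inv_mul_cancel a := by obtain ⟨sa, ra⟩ := a; ext <;> cases ra <;> simp

@[simp] lemma act_one (t : TimeCircle) : (1 : TimeSym).act t = t := by simp [act]

@[simp] lemma act_mul (g h : TimeSym) (t : TimeCircle) :
    (g * h).act t = g.act (h.act t) := by
  obtain ⟨sg, rg⟩ := g; obtain ⟨sh, rh⟩ := h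
  simp only [act, mul_shift, mul_rev]
  cases rg <;> cases rh <;> simp <;> abel

/-- The rotation `t ↦ θ + t` of the time circle, as an element of `Ŝ¹`. -/
def trot (θ : ℝ) : TimeSym := ⟨(θ : TimeCircle), false⟩

/-- The reflection `t ↦ θ - t` of the time circle, as an element of `Ŝ¹`. -/
def tref (θ : ℝ) : TimeSym := ⟨(θ : TimeCircle), true⟩

end TimeSym

/-- The orthogonal group `O(2)`, realised as the group of `ℝ`-linear isometries of `ℂ`. -/
abbrev O2 : Type := ℂ ≃ₗᵢ[ℝ] ℂ

/-- `A ∈ SO(2)`: `A` is a rotation, i.e. acts as multiplication by a unit complex number. -/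
def IsRotO (A : O2) : Prop := ∀ z : ℂ, A z = A 1 * z

/-- Rotation of the plane through the angle `2πa`, as an element of `O(2)`. -/
def rotO (a : ℝ) : O2 := rotation (Circle.exp (2 * Real.pi * a))

/-- The full symmetry group `Γ × Ŝ¹ = O(2) × Sₙ × Ŝ¹` acting on loops in configuration space. -/
abbrev FullG (n : ℕ) : Type := (O2 × Equiv.Perm (Fin n)) × TimeSym

/-- The element `g = (A, σ, τ)` of `Γ × Ŝ¹` fixes the loop `u` in configuration space. -/
def Fixes {n : ℕ} (g : FullG n) (u : TimeCircle → Fin n → ℂ) : Prop :=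
  ∀ (t : TimeCircle) (j : Fin n), u (g.2.act t) j = g.1.1 (u t (g.1.2⁻¹ j))

/-- The symmetry group of a loop `u`: its stabilizer in `Γ × Ŝ¹`. -/
def symmGroup (n : ℕ) (u : TimeCircle → Fin n → ℂ) : Subgroup (FullG n) where
  carrier := {g | Fixes g u}
  one_mem' := by
    intro t j
    simp [Fixes]
  mul_mem' := by
    intro a b ha hb t j
    have h1 := ha (b.2.act t) j
    have h2 := hb t (a.1.2⁻¹ j)
    simp only [Fixes] at *
    simp only [Prod.fst_mul, Prod.snd_mul, TimeSym.act_mul]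
    rw [h1, h2]
    simp [mul_inv_rev]
  inv_mem' := by
    intro a ha
    have key : ∀ (t : TimeCircle) (j : Fin n),
        a.1.1⁻¹ (u t (a.1.2 j)) = u (a.2⁻¹.act t) j := by
      intro t j
      have h := ha (a.2⁻¹.act t) (a.1.2 j)
      rw [← TimeSym.act_mul, mul_inv_cancel, TimeSym.act_one] at h
      rw [show a.1.2⁻¹ (a.1.2 j) = j from a.1.2.symm_apply_apply j] at h
      rw [h, LinearIsometryEquiv.coe_inv, LinearIsometryEquiv.symm_apply_apply]
    intro t j
    show u ((a⁻¹).2.act t) j = (a⁻¹).1.1 (u t ((a⁻¹).1.2⁻¹ j))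
    simp only [Prod.fst_inv, Prod.snd_inv, inv_inv]
    exact (key t j).symm

variable {n : ℕ}

/-- The basic cyclic permutation `σ₁ : j ↦ j + 1`. -/
def sigma1 (n : ℕ) [NeZero n] : Equiv.Perm (Fin n) := Equiv.addLeft 1

/-- The permutation `s₁ : j ↦ -j` (in `1`-indexed notation, `j ↦ 2 - j`). -/
def sOne (n : ℕ) [NeZero n] : Equiv.Perm (Fin n) := Equiv.neg (Fin n)

/-- The choreography element `𝔠 = (I, σ₁, -1/n)`. -/
def chorEl (n : ℕ) [NeZero n] : FullG n := ((1, sigma1 n), TimeSym.trot (-(1 / n)))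

/-- Projection `ρ : Γ × Ŝ¹ → O(2)`. -/
def rhoHom (n : ℕ) : FullG n →* O2 :=
  (MonoidHom.fst _ _).comp (MonoidHom.fst _ _)

/-- Projection `σ : Γ × Ŝ¹ → Sₙ`. -/
def sigHom (n : ℕ) : FullG n →* Equiv.Perm (Fin n) :=
  (MonoidHom.snd _ _).comp (MonoidHom.fst _ _)

/-- Projection `τ : Γ × Ŝ¹ → Ŝ¹`. -/
def tauHom (n : ℕ) : FullG n →* TimeSym := MonoidHom.snd _ _

theorem exists_eq_zero_of_sum_eq_zero {X ι : Type*} [TopologicalSpace X] [PreconnectedSpace X]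
    {g : X → ℝ} (hg : Continuous g) {s : Finset ι} (hs : s.Nonempty) (x : ι → X)
    (hsum : ∑ i ∈ s, g (x i) = 0) : ∃ y, g y = 0 := by
  obtain ⟨i, -, hi⟩ := Finset.exists_le_of_sum_le (f := fun i ↦ g (x i)) (g := fun _ ↦ 0) hs
    (by simp [hsum])
  obtain ⟨j, -, hj⟩ := Finset.exists_le_of_sum_le (f := fun _ ↦ 0) (g := fun i ↦ g (x i)) hs
    (by simp [hsum])
  exact intermediate_value_univ (x i) (x j) hg ⟨hi, hj⟩

theorem AddCircle.exists_apply_add_eq {p : ℝ} {f : AddCircle p → ℝ} (hf : Continuous f)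
    {n : ℕ} (hn : n ≠ 0) : ∃ t, f (t + ↑(p / n)) = f t := by
  set x : ℕ → AddCircle p := fun k ↦ ↑(k * (p / n))
  have hx : ∀ k, x (k + 1) = x k + ↑(p / n) := fun k ↦ by
    simp only [x, ← AddCircle.coe_add]; push_cast; ring_nf
  have hxn : x n = x 0 := by
    simp only [x, Nat.cast_zero, zero_mul, mul_div_cancel₀ p (Nat.cast_ne_zero.mpr hn),
      AddCircle.coe_period, AddCircle.coe_zero]
  have htel : ∑ k ∈ Finset.range n, (f (x k + ↑(p / n)) - f (x k)) = 0 := by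
    simp only [← hx, Finset.sum_range_sub (fun k ↦ f (x k)), hxn, sub_self]
  obtain ⟨t, ht⟩ := exists_eq_zero_of_sum_eq_zero
    ((hf.comp (continuous_add_const _)).sub hf) (Finset.nonempty_range_iff.mpr hn) x htel
  exact ⟨t, sub_eq_zero.mp ht⟩

open scoped RealInnerProductSpace

theorem Submodule.exists_injOn_inner_of_finrank_le_one {E : Type*} [NormedAddCommGroup E]
    [InnerProductSpace ℝ E] (S : Submodule ℝ E) [Module.Finite ℝ S]
    (hS : Module.finrank ℝ S ≤ 1) : ∃ v : E, Set.InjOn (fun z ↦ ⟪v, z⟫) S := by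
  obtain ⟨v, rfl⟩ := ((Submodule.finrank_le_one_iff_isPrincipal S).mp hS).principal
  refine ⟨v, fun z hz w hw hzw ↦ sub_eq_zero.mp ?_⟩
  obtain ⟨c, hc⟩ := Submodule.mem_span_singleton.mp (Submodule.sub_mem _ hz hw)
  have hinner : c * ⟪v, v⟫ = 0 := by
    rw [← real_inner_smul_right, hc, inner_sub_right, sub_eq_zero]
    exact hzw
  rw [← hc, smul_eq_zero]
  simpa only [mul_eq_zero, inner_self_eq_zero] using hinner

theorem LinearIsometryEquiv.exists_injOn_inner_fixedPoints {E : Type*} [NormedAddCommGroup E]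
    [InnerProductSpace ℝ E] [FiniteDimensional ℝ E] (hE : Module.finrank ℝ E ≤ 2)
    {A : E ≃ₗᵢ[ℝ] E} (hA : A ≠ 1) :
    ∃ v : E, Set.InjOn (fun z ↦ ⟪v, z⟫) (Function.fixedPoints A) := by
  set S := LinearMap.eqLocus (A : E →ₗ[ℝ] E) LinearMap.id
  have hS : S ≠ ⊤ := fun h ↦ hA <| LinearIsometryEquiv.ext fun z ↦ (h ▸ Submodule.mem_top : z ∈ S)
  have := Submodule.finrank_lt hS
  exact S.exists_injOn_inner_of_finrank_le_one (by omega)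

theorem choreography_step {n : ℕ} [NeZero n] {u : TimeCircle → Fin n → ℂ}
    (hchor : Fixes (chorEl n) u) (t : TimeCircle) : u (t + ↑(1 / n : ℝ)) 0 = u t 1 := by
  simpa [chorEl, TimeSym.act, TimeSym.trot, sigma1] using (hchor (t + ↑(1 / n : ℝ)) 1).symm

theorem statement_0_general (n : ℕ) (hn : 3 ≤ n) [NeZero n]
    (u : TimeCircle → Fin n → ℂ) (hu : Continuous u)
    (hcoll : ∀ t, Function.Injective (u t))
    (hchor : chorEl n ∈ symmGroup n u) :
    (∀ σ : Equiv.Perm (Fin n), (((1, σ), 1) : FullG n) ∈ symmGroup n u → σ = 1) ∧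
    (∀ A : O2, (((A, 1), 1) : FullG n) ∈ symmGroup n u → A = 1) := by
  refine ⟨fun σ hσ ↦ ?_, fun A hA ↦ ?_⟩
  · have hfix : ∀ j, u 0 (σ⁻¹ j) = u 0 j := fun j ↦ by simpa using (hσ 0 j).symm
    exact inv_eq_one.mp (Equiv.ext fun j ↦ hcoll 0 (hfix j))
  · by_contra hA1
    have hfix : ∀ t j, u t j ∈ Function.fixedPoints A := fun t j ↦ by
      simpa [Function.IsFixedPt] using (hA t j).symm
    obtain ⟨v, hv⟩ := A.exists_injOn_inner_fixedPoints Complex.finrank_real_complex.le hA1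
    obtain ⟨t, ht⟩ := AddCircle.exists_apply_add_eq (f := fun t ↦ ⟪v, u t 0⟫)
      (continuous_const.inner ((continuous_apply 0).comp hu)) (NeZero.ne n)
    rw [choreography_step hchor] at ht
    have h01 : (0 : Fin n) ≠ 1 := Fin.ne_of_val_ne (by simp [Nat.mod_eq_of_lt (by omega : 1 < n)])
    exact h01 (hcoll t (hv (hfix t 1) (hfix t 0) ht)).symm

/-- For a collision-free choreography `u` with symmetry group
`G = symmGroup n u`, the intersections `ker τ ∩ ker ρ` and `ker τ ∩ ker σ` are trivial:
if `(I, σ, 0) ∈ G` then `σ = e`, and if `(A, e, 0) ∈ G` then `A = I`. -/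
theorem statement_0 (n : ℕ) (hn : 3 ≤ n) [NeZero n]
    (u : TimeCircle → Fin n → ℂ) (hu : Continuous u)
    (hsum : ∀ t, ∑ j, u t j = 0)
    (hcoll : ∀ t, Function.Injective (u t))
    (hchor : chorEl n ∈ symmGroup n u) :
    (∀ σ : Equiv.Perm (Fin n), (((1, σ), 1) : FullG n) ∈ symmGroup n u → σ = 1) ∧
    (∀ A : O2, (((A, 1), 1) : FullG n) ∈ symmGroup n u → A = 1) :=
  statement_0_general n hn u hu hcoll hchor

end
end

section
/- Let n ≥ 3 and let u = (z₁,…,zₙ) be a choreography in X⁽ⁿ⁾ with each zⱼ : ℝ → ℂ continuously differentiable and 1-periodic, and suppose the angular momentum J(t) = Σⱼ Im( conj(zⱼ(t)) · zⱼ′(t) ) is constant in t. If the symmetry group of u contains an element (A, σ, τ) for which exactly one of the following holds — A ∉ SO(2) (A is a reflection), or τ ∉ S¹ (τ is time-reversing) — then J ≡ 0. In particular, a choreography with constant angular momentum whose symmetry group contains (κ, σ₂, −1/(2n)) (type C'(n,2)) or (R_π, s₁, 0̄) (types D'(n,1), D'(n,2)) has zero angular momentum. -/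
/-!
`Im (conj z * w)` is the oriented area form of `ℂ ≅ ℝ²`, so an `ℝ`-linear map `A` multiplies it
by `det A`, and a time reparametrization `t ↦ θ + c t` multiplies velocities by `c = ±1`.
A symmetry `(A, σ, τ)` of the loop therefore gives `c J(τ t) = det A · J(t)`, and exactly one
of `A`, `τ` reversing orientation means `c = -det A`. If `J` is constant this forces `J = 0`.
-/

noncomputable section

open Complex ComplexConjugate

theorem Complex.im_conj_map_mul_map (f : ℂ →ₗ[ℝ] ℂ) (z w : ℂ) :
    (conj (f z) * f w).im = LinearMap.det f * (conj z * w).im := by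
  have hdet : LinearMap.det f = (f 1).re * (f I).im - (f I).re * (f 1).im := by
    rw [← LinearMap.det_toMatrix basisOneI, Matrix.det_fin_two]
    simp [LinearMap.toMatrix_apply]
  have hf : ∀ z : ℂ, f z = z.re • f 1 + z.im • f I := fun z => by
    conv_lhs => rw [show z = z.re • (1 : ℂ) + z.im • I by apply Complex.ext <;> simp]
    rw [map_add, map_smul, map_smul]
  rw [hdet, hf z, hf w]
  simp only [map_add, mul_im, mul_re, add_re, add_im, conj_re, conj_im, real_smul, ofReal_re,
    ofReal_im]
  ring

theorem conjLIE_trans_rotation_not_forall_eq_mul (a : Circle) :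
    ¬ ∀ w, (conjLIE.trans (rotation a)) w = (conjLIE.trans (rotation a)) 1 * w := by
  intro h
  simpa [rotation_apply, neg_eq_iff_add_eq_zero, ← two_mul] using h I

namespace LinearIsometryEquiv

variable {A : ℂ ≃ₗᵢ[ℝ] ℂ}

theorem det_complex_of_forall_eq_mul (h : ∀ w, A w = A 1 * w) :
    LinearMap.det (A.toLinearEquiv : ℂ →ₗ[ℝ] ℂ) = 1 := by
  obtain ⟨a, rfl | rfl⟩ := linear_isometry_complex A
  · exact det_rotation a
  · exact absurd h (conjLIE_trans_rotation_not_forall_eq_mul a)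

theorem det_complex_of_not_forall_eq_mul (h : ¬ ∀ w, A w = A 1 * w) :
    LinearMap.det (A.toLinearEquiv : ℂ →ₗ[ℝ] ℂ) = -1 := by
  obtain ⟨a, rfl | rfl⟩ := linear_isometry_complex A
  · exact absurd (fun w => by simp [rotation_apply]) h
  · rw [toLinearEquiv_trans, LinearEquiv.coe_trans, LinearMap.det_comp, det_rotation, one_mul]
    exact det_conjAe

end LinearIsometryEquiv

theorem HasDerivAt.smul_eq_map_of_comp_affine_eq {E F : Type*} [NormedAddCommGroup E]
    [NormedSpace ℝ E] [NormedAddCommGroup F] [NormedSpace ℝ F] {f : ℝ → F} {g : ℝ → E}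
    {x : F} {y : E} {θ c t : ℝ} (A : E →L[ℝ] F) (hf : HasDerivAt f x (θ + c * t))
    (hg : HasDerivAt g y t) (h : ∀ s, f (θ + c * s) = A (g s)) :
    c • x = A y := by
  have hlhs : HasDerivAt (fun s => f (θ + c * s)) (c • x) t :=
    hf.scomp t (((hasDerivAt_id t).const_mul c).const_add θ |>.congr_deriv (mul_one c))
  have hrhs : HasDerivAt (fun s => A (g s)) (A y) t := A.hasFDerivAt.comp_hasDerivAt t hg
  exact hlhs.unique (by simpa only [h] using hrhs)

section AngularMomentum

variable {ι : Type*} [Fintype ι]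

def angularMomentum (z v : ι → ℂ) : ℝ :=
  ∑ j, (conj (z j) * v j).im

theorem angularMomentum_smul_right (z v : ι → ℂ) (c : ℝ) :
    angularMomentum z (c • v) = c * angularMomentum z v := by
  simp only [angularMomentum, Pi.smul_apply, mul_smul_comm, smul_im, smul_eq_mul, Finset.mul_sum]

theorem angularMomentum_map_comp_perm (f : ℂ →ₗ[ℝ] ℂ) (σ : Equiv.Perm ι) (z v : ι → ℂ) :
    angularMomentum (fun j => f (z (σ j))) (fun j => f (v (σ j))) =
      LinearMap.det f * angularMomentum z v := by
  simp only [angularMomentum, Complex.im_conj_map_mul_map, ← Finset.mul_sum]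
  rw [Equiv.sum_comp σ (fun j => (conj (z j) * v j).im)]

end AngularMomentum

theorem statement_9_general (n : ℕ)
    (u u' : ℝ → Fin n → ℂ)
    (hder : ∀ (j : Fin n) (t : ℝ), HasDerivAt (fun s => u s j) (u' t j) t)
    (hJconst : ∀ s t : ℝ,
      (∑ j, ((starRingEnd ℂ) (u s j) * u' s j).im) =
      (∑ j, ((starRingEnd ℂ) (u t j) * u' t j).im))
    (A : ℂ ≃ₗᵢ[ℝ] ℂ) (σ : Equiv.Perm (Fin n)) (θ : ℝ) (ε : Bool)
    (hsymm : ∀ (t : ℝ) (j : Fin n),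
      u (θ + (if ε then -t else t)) j = A (u t (σ⁻¹ j)))
    (hxor : Xor' (¬ ∀ w : ℂ, A w = A 1 * w) (ε = true)) :
    ∀ t : ℝ, (∑ j, ((starRingEnd ℂ) (u t j) * u' t j).im) = 0 := by
  intro t
  set c : ℝ := if ε then -1 else 1
  set d := LinearMap.det (A.toLinearEquiv : ℂ →ₗ[ℝ] ℂ)
  have hc_ne_d : c ≠ d := by
    rcases hxor with ⟨hrefl, hfwd⟩ | ⟨hrev, hrot⟩
    · rw [show d = -1 from A.det_complex_of_not_forall_eq_mul hrefl,
        show c = 1 by simp [c, hfwd]]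
      norm_num
    · rw [show d = 1 from A.det_complex_of_forall_eq_mul (not_not.mp hrot),
        show c = -1 by simp [c, hrev]]
      norm_num
  have hpos : ∀ s j, u (θ + c * s) j = A (u s (σ⁻¹ j)) := fun s j => by
    rw [← hsymm]; cases ε <;> simp [c]
  have hvel : c • u' (θ + c * t) = fun j => A (u' t (σ⁻¹ j)) := funext fun j =>
    (hder j _).smul_eq_map_of_comp_affine_eq (A.toContinuousLinearEquiv : ℂ →L[ℝ] ℂ)
      (hder (σ⁻¹ j) t) (fun s => hpos s j)
  have hJ : c * angularMomentum (u (θ + c * t)) (u' (θ + c * t)) =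
      d * angularMomentum (u t) (u' t) := by
    rw [← angularMomentum_smul_right, hvel, funext (hpos t)]
    exact angularMomentum_map_comp_perm _ σ⁻¹ (u t) (u' t)
  have hJt : (c - d) * angularMomentum (u t) (u' t) = 0 := by
    rw [sub_mul, ← hJ, show angularMomentum (u (θ + c * t)) (u' (θ + c * t)) =
      angularMomentum (u t) (u' t) from hJconst _ t, sub_self]
  exact (mul_eq_zero.mp hJt).resolve_left (sub_ne_zero.mpr hc_ne_d)

/-- A choreography with constant angular momentum whose symmetry group
contains an element `(A, σ, τ)` such that exactly one of "`A` is a reflection" and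
"`τ` is time-reversing" holds, has zero angular momentum. -/
theorem statement_9 (n : ℕ) (hn : 3 ≤ n) [NeZero n]
    (u u' : ℝ → Fin n → ℂ)
    (hder : ∀ (j : Fin n) (t : ℝ), HasDerivAt (fun s => u s j) (u' t j) t)
    (hder' : ∀ j : Fin n, Continuous fun t => u' t j)
    (hper : ∀ t, u (t + 1) = u t)
    (hsum : ∀ t, ∑ j, u t j = 0)
    (hcoll : ∀ t, Function.Injective (u t))
    (hchor : ∀ (t : ℝ) (j : Fin n), u (t + 1 / n) j = u t (j + 1))
    (hJconst : ∀ s t : ℝ,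
      (∑ j, ((starRingEnd ℂ) (u s j) * u' s j).im) =
      (∑ j, ((starRingEnd ℂ) (u t j) * u' t j).im))
    (A : ℂ ≃ₗᵢ[ℝ] ℂ) (σ : Equiv.Perm (Fin n)) (θ : ℝ) (ε : Bool)
    (hsymm : ∀ (t : ℝ) (j : Fin n),
      u (θ + (if ε then -t else t)) j = A (u t (σ⁻¹ j)))
    (hxor : Xor' (¬ ∀ w : ℂ, A w = A 1 * w) (ε = true)) :
    ∀ t : ℝ, (∑ j, ((starRingEnd ℂ) (u t j) * u' t j).im) = 0 :=
  statement_9_general n u u' hder hJconst A σ θ ε hsymm hxor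

end
end

section
/- Let c ≥ 2 and r ∈ ℤ with r ≢ 0 (mod c), and let z : ℝ → ℂ∖{0} be a continuous 1-periodic function satisfying z(t + 1/c) = e^{2πir/c} · z(t) for all t. Then for every continuous function θ : ℝ → ℝ with z(t) = |z(t)| · e^{2πiθ(t)} for all t, the winding number θ(1) − θ(0) of z about the origin is an integer congruent to r modulo c; in particular it is non-zero. (The underlying curve of any choreography with non-trivial core satisfies such a relation, hence has non-zero winding number about the origin.) -/
/-!
The symmetry `z(t + 1/c) = e^{2πir/c} z(t)` shows that `θ(t + 1/c) - θ(t) - r/c` is an integer for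
every `t`; being continuous, it is a constant integer `n`. Summing over the `c` steps of length `1/c`
that make up `[0, 1]` gives `θ(1) - θ(0) = c n + r`, which is `≡ r (mod c)` and hence non-zero.
-/

open Complex
open scoped Real

theorem exists_int_sub_eq_of_eq_norm_mul_exp {u : ℂ} (hu : u ≠ 0) {x y : ℝ}
    (hx : u = ‖u‖ * exp (2 * π * I * x)) (hy : u = ‖u‖ * exp (2 * π * I * y)) :
    ∃ n : ℤ, x - y = n := by
  have hnorm : (‖u‖ : ℂ) ≠ 0 := by simpa using hu
  obtain ⟨n, hn⟩ := exp_eq_exp_iff_exists_int.mp (mul_left_cancel₀ hnorm (hx.symm.trans hy))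
  refine ⟨n, ofReal_injective ?_⟩
  have h2πI : 2 * (π : ℂ) * I ≠ 0 := by simp [Real.pi_ne_zero, I_ne_zero]
  apply mul_left_cancel₀ h2πI
  push_cast
  linear_combination hn

theorem eq_norm_mul_exp_add_of_eq_exp_mul {u w : ℂ} {a x : ℝ}
    (hw : w = exp (2 * π * I * a) * u) (hu : u = ‖u‖ * exp (2 * π * I * x)) :
    w = ‖w‖ * exp (2 * π * I * ↑(x + a)) := by
  have hnorm : ‖w‖ = ‖u‖ := by
    rw [hw, norm_mul, show 2 * π * I * a = ((2 * π * a : ℝ) : ℂ) * I by push_cast; ring,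
      norm_exp_ofReal_mul_I, one_mul]
  rw [hnorm, hw]
  conv_lhs => rw [hu]
  rw [ofReal_add, mul_add, exp_add]
  ring

theorem eq_of_continuous_of_forall_exists_int {X : Type*} [TopologicalSpace X]
    [PreconnectedSpace X] {g : X → ℝ} (hg : Continuous g) (hint : ∀ x, ∃ n : ℤ, g x = n)
    (x y : X) : g x = g y := by
  choose n hn using hint
  have hcont : Continuous n := by
    rw [Int.isClosedEmbedding_coe_real.continuous_iff]
    exact hg.congr hn
  rw [hn, hn, PreconnectedSpace.constant ‹_› hcont]

theorem sub_eq_nsmul_of_forall_add_sub_eq {G H : Type*} [AddCommGroup G] [AddCommGroup H]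
    {f : G → H} {h : G} {d : H} (hf : ∀ t, f (t + h) - f t = d) (n : ℕ) (t : G) :
    f (t + n • h) - f t = n • d := by
  induction n with
  | zero => simp
  | succ n ih =>
    rw [succ_nsmul, succ_nsmul, ← add_assoc, ← ih, ← hf (t + n • h)]
    abel

theorem statement_13_general (c : ℕ) (hc : 2 ≤ c) (r : ℤ) (hr : ¬ ((c : ℤ) ∣ r))
    (z : ℝ → ℂ) (h0 : ∀ t, z t ≠ 0)
    (hsym : ∀ t, z (t + 1 / c) =
      Complex.exp (2 * (Real.pi : ℂ) * Complex.I * (r : ℂ) / (c : ℂ)) * z t)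
    (θ : ℝ → ℝ) (hθ : Continuous θ)
    (hlift : ∀ t, z t = (‖z t‖ : ℂ) *
      Complex.exp (2 * (Real.pi : ℂ) * Complex.I * ((θ t : ℝ) : ℂ))) :
    ∃ m : ℤ, θ 1 - θ 0 = (m : ℝ) ∧ m ≡ r [ZMOD (c : ℤ)] ∧ m ≠ 0 := by
  have hc0 : (c : ℝ) ≠ 0 := by positivity
  set g : ℝ → ℝ := fun t ↦ θ (t + 1 / c) - (θ t + r / c)
  have hg_int : ∀ t, ∃ n : ℤ, g t = n := fun t ↦ by
    refine exists_int_sub_eq_of_eq_norm_mul_exp (h0 _) (hlift _)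
      (eq_norm_mul_exp_add_of_eq_exp_mul ((hsym t).trans ?_) (hlift t))
    push_cast
    ring_nf
  obtain ⟨n, hn⟩ := hg_int 0
  have hstep : ∀ t, θ (t + 1 / c) - θ t = n + r / c := fun t ↦ by
    have := eq_of_continuous_of_forall_exists_int (by fun_prop) hg_int t 0
    simp only [g] at this hn
    linarith
  have hwind : θ 1 - θ 0 = ((c * n + r : ℤ) : ℝ) := by
    have := sub_eq_nsmul_of_forall_add_sub_eq hstep c 0
    rw [nsmul_eq_mul, nsmul_eq_mul, mul_one_div_cancel hc0, zero_add] at this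
    rw [this]
    push_cast
    field_simp
  refine ⟨c * n + r, hwind, Int.modEq_iff_dvd.mpr ⟨-n, by ring⟩, fun hm ↦ hr ⟨-n, by linarith⟩⟩

/-- If a continuous `1`-periodic non-vanishing curve `z` satisfies
`z(t + 1/c) = e^{2πir/c} z(t)` with `r ≢ 0 (mod c)`, then its winding number about the
origin is an integer congruent to `r` modulo `c`; in particular it is non-zero. -/
theorem statement_13 (c : ℕ) (hc : 2 ≤ c) (r : ℤ) (hr : ¬ ((c : ℤ) ∣ r))
    (z : ℝ → ℂ) (hz : Continuous z) (h0 : ∀ t, z t ≠ 0)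
    (hper : ∀ t, z (t + 1) = z t)
    (hsym : ∀ t, z (t + 1 / c) =
      Complex.exp (2 * (Real.pi : ℂ) * Complex.I * (r : ℂ) / (c : ℂ)) * z t)
    (θ : ℝ → ℝ) (hθ : Continuous θ)
    (hlift : ∀ t, z t = (‖z t‖ : ℂ) *
      Complex.exp (2 * (Real.pi : ℂ) * Complex.I * ((θ t : ℝ) : ℂ))) :
    ∃ m : ℤ, θ 1 - θ 0 = (m : ℝ) ∧ m ≡ r [ZMOD (c : ℤ)] ∧ m ≠ 0 :=
  statement_13_general c hc r hr z h0 hsym θ hθ hlift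
end

section
/- Let Γ be a group acting continuously (by homeomorphisms) on a topological space X, let G ≤ Γ be a subgroup, and let τ : G → S¹ = ℝ/ℤ be a homomorphism whose image is the cyclic group of order r generated by 1/r; set K = ker τ and X^K = Fix(K, X). Fix g ∈ G with τ(g) = 1/r. Give the free loop space ΛX = C(ℝ/ℤ, X) and the relative loop space Λ^g X^K = {γ ∈ C([0,1], X^K) : γ(1) = g·γ(0)} the compact-open topologies, and set Fix(G_τ, ΛX) = {u ∈ ΛX : h·u(t) = u(t + τ(h)) for all h ∈ G and all t}. Then every u ∈ Fix(G_τ, ΛX) takes values in X^K, and the map u ↦ (t ↦ u(t/r)) is a homeomorphism from Fix(G_τ, ΛX) onto Λ^g X^K. -/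
/-!
A `g`-loop `γ` extends to `E : ℝ → X`, `E t = g ^ ⌊t⌋ • γ (fract t)`, which is continuous, jointly
in `γ`, because `γ 1 = g • γ 0` makes the pieces on the intervals `[n, n + 1]` agree at the
integers. If `γ` takes values in `X^K`, so does `E`, as `K` is normal in `G`; since `g ^ r ∈ K`,
the map `x ↦ E (r x)` is `1`-periodic and descends to a loop on `ℝ/ℤ`. Writing any `h ∈ G` as
`k * g ^ m` with `k ∈ K` shows that this loop is `G_τ`-invariant, and it inverts `u ↦ u (· / r)`
since the invariance of `u` under `g ^ ⌊r x⌋` recovers `u x` from its values on `[0, 1/r]`.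
-/

open Set Function Filter unitInterval

noncomputable section

variable {G X : Type*} [Group G] [TopologicalSpace X] [MulAction G X]

def relLoopExtend (g : G) (γ : C(I, X)) (t : ℝ) : X :=
  g ^ ⌊t⌋ • γ (projIcc 0 1 zero_le_one (Int.fract t))

section relLoopExtend

variable {g : G} {γ : C(I, X)}

theorem relLoopExtend_add_intCast (t : ℝ) (m : ℤ) :
    relLoopExtend g γ (t + m) = g ^ m • relLoopExtend g γ t := by
  simp only [relLoopExtend, Int.floor_add_intCast, Int.fract_add_intCast, smul_smul, ← zpow_add,
    add_comm]

theorem relLoopExtend_of_mem_Icc (hγ : γ 1 = g • γ 0) {s : ℝ} (hs : s ∈ Icc (0 : ℝ) 1) :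
    relLoopExtend g γ s = γ (projIcc 0 1 zero_le_one s) := by
  rcases hs.2.lt_or_eq with hlt | rfl
  · have hfloor : ⌊s⌋ = 0 := Int.floor_eq_zero_iff.mpr ⟨hs.1, hlt⟩
    simp [relLoopExtend, Int.fract, hfloor]
  · simpa [relLoopExtend] using hγ.symm

theorem relLoopExtend_eq_of_mem_Icc (hγ : γ 1 = g • γ 0) {n : ℤ} {t : ℝ}
    (ht : t ∈ Icc (n : ℝ) (n + 1)) :
    relLoopExtend g γ t = g ^ n • γ (projIcc 0 1 zero_le_one (t - n)) := by
  rw [← relLoopExtend_of_mem_Icc hγ ⟨sub_nonneg.2 ht.1, by linarith [ht.2]⟩,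
    ← relLoopExtend_add_intCast, sub_add_cancel]

theorem relLoopExtend_coe (hγ : γ 1 = g • γ 0) (s : I) : relLoopExtend g γ s = γ s := by
  rw [relLoopExtend_of_mem_Icc hγ s.2, projIcc_val]

theorem continuous_relLoopExtend [ContinuousConstSMul G X] :
    Continuous fun p : {γ : C(I, X) // γ 1 = g • γ 0} × ℝ => relLoopExtend g p.1.1 p.2 := by
  refine LocallyFinite.continuous (f := fun n : ℤ => univ ×ˢ Icc (n : ℝ) (n + 1)) ?_ ?_
    (fun _ => isClosed_univ.prod isClosed_Icc) fun n => ?_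
  · exact (locallyFinite_Icc_of_tendsto tendsto_intCast_atTop_atTop
      (tendsto_atBot_add_const_right _ _ (tendsto_intCast_atBot_iff.2 tendsto_id))).prod_left _
  · exact eq_univ_of_forall fun p =>
      mem_iUnion.2 ⟨⌊p.2⌋, trivial, Int.floor_le _, (Int.lt_floor_add_one _).le⟩
  · have : Continuous fun p : {γ : C(I, X) // γ 1 = g • γ 0} × ℝ =>
        g ^ n • p.1.1 (projIcc 0 1 zero_le_one (p.2 - n)) := by fun_prop
    exact this.continuousOn.congr fun p hp => relLoopExtend_eq_of_mem_Icc p.1.2 hp.2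

theorem smul_relLoopExtend_of_mem {N : Subgroup G} [N.Normal]
    (hγ : ∀ (s : I) (k : G), k ∈ N → k • γ s = γ s) {k : G} (hk : k ∈ N) (t : ℝ) :
    k • relLoopExtend g γ t = relLoopExtend g γ t := by
  have hconj := ‹N.Normal›.conj_mem k hk (g ^ (-⌊t⌋))
  calc k • relLoopExtend g γ t
      = g ^ ⌊t⌋ • (g ^ (-⌊t⌋) * k * (g ^ (-⌊t⌋))⁻¹) •
          γ (projIcc 0 1 zero_le_one (Int.fract t)) := by
        simp only [relLoopExtend, smul_smul]; group
    _ = relLoopExtend g γ t := by rw [hγ _ _ hconj, relLoopExtend]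

theorem periodic_relLoopExtend_mul {N : Subgroup G} [N.Normal] {r : ℕ} (hgr : g ^ r ∈ N)
    (hγ : ∀ (s : I) (k : G), k ∈ N → k • γ s = γ s) :
    Periodic (fun x : ℝ => relLoopExtend g γ (r * x)) 1 := fun x => by
  have := relLoopExtend_add_intCast (g := g) (γ := γ) (r * x) r
  rw [zpow_natCast, smul_relLoopExtend_of_mem hγ hgr, Int.cast_natCast] at this
  simpa [mul_add] using this

end relLoopExtend

section TwistedLoops

variable (τ : G →* Multiplicative (AddCircle (1 : ℝ)))

/-- `u ∈ Fix(G_τ, ΛX)`. -/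
def IsTwistedLoop (u : C(AddCircle (1 : ℝ), X)) : Prop :=
  ∀ (h : G) (t : AddCircle (1 : ℝ)), h • u t = u (t + Multiplicative.toAdd (τ h))

/-- `γ ∈ Λ^g X^N`. -/
def IsRelLoopIn (N : Subgroup G) (g : G) (γ : C(I, X)) : Prop :=
  (∀ (s : I) (k : G), k ∈ N → k • γ s = γ s) ∧ γ 1 = g • γ 0

def scaledArc (r : ℕ) : C(I, AddCircle (1 : ℝ)) :=
  ⟨fun s => ((s / r : ℝ) : AddCircle (1 : ℝ)), by fun_prop⟩

variable {τ}

theorem IsTwistedLoop.smul_eq_of_mem_ker {u : C(AddCircle (1 : ℝ), X)} (hu : IsTwistedLoop τ u)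
    (t : AddCircle (1 : ℝ)) {k : G} (hk : k ∈ τ.ker) : k • u t = u t := by
  simpa [MonoidHom.mem_ker.mp hk] using hu k t

variable {g : G} {r : ℕ}

theorem toAdd_map_zpow_of_eq_ofAdd_inv
    (hg : τ g = Multiplicative.ofAdd ((1 / (r : ℝ) : ℝ) : AddCircle (1 : ℝ))) (m : ℤ) :
    Multiplicative.toAdd (τ (g ^ m)) = ((m / r : ℝ) : AddCircle (1 : ℝ)) := by
  rw [map_zpow, hg, toAdd_zpow, toAdd_ofAdd, ← AddCircle.coe_zsmul, zsmul_eq_mul, mul_one_div]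

theorem pow_mem_ker_of_eq_ofAdd_inv
    (hg : τ g = Multiplicative.ofAdd ((1 / (r : ℝ) : ℝ) : AddCircle (1 : ℝ))) (hr : r ≠ 0) :
    g ^ r ∈ τ.ker := by
  have h := toAdd_map_zpow_of_eq_ofAdd_inv hg r
  rw [Int.cast_natCast, div_self (Nat.cast_ne_zero.2 hr), zpow_natCast, AddCircle.coe_period] at h
  exact MonoidHom.mem_ker.2 (toAdd_eq_zero.1 h)

theorem IsTwistedLoop.isRelLoopIn_comp_scaledArc
    (hg : τ g = Multiplicative.ofAdd ((1 / (r : ℝ) : ℝ) : AddCircle (1 : ℝ)))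
    {u : C(AddCircle (1 : ℝ), X)} (hu : IsTwistedLoop τ u) :
    IsRelLoopIn τ.ker g (u.comp (scaledArc r)) :=
  ⟨fun _ _ hk => hu.smul_eq_of_mem_ker _ hk, by simpa [scaledArc, hg] using (hu g 0).symm⟩

theorem exists_mem_ker_mul_zpow_of_range_eq_zpowers (hrange : τ.range = Subgroup.zpowers (τ g))
    (h : G) : ∃ m : ℤ, ∃ k ∈ τ.ker, h = k * g ^ m := by
  obtain ⟨m, hm⟩ := Subgroup.mem_zpowers_iff.1 (hrange ▸ MonoidHom.mem_range.2 ⟨h, rfl⟩)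
  refine ⟨m, h * g ^ (-m), ?_, by group⟩
  rw [MonoidHom.mem_ker, map_mul, map_zpow, zpow_neg, hm, mul_inv_cancel]

variable (τ) [ContinuousConstSMul G X]
    (hg : τ g = Multiplicative.ofAdd ((1 / (r : ℝ) : ℝ) : AddCircle (1 : ℝ)))
    (hr : r ≠ 0)

def relLoopToCircle : C({γ : C(I, X) // IsRelLoopIn τ.ker g γ}, C(AddCircle (1 : ℝ), X)) :=
  ContinuousMap.curry
    { toFun := fun p =>
        (periodic_relLoopExtend_mul (pow_mem_ker_of_eq_ofAdd_inv hg hr) p.1.2.1).lift p.2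
      continuous_toFun := by
        refine (IsOpenQuotientMap.id.prodMap
          QuotientAddGroup.isOpenQuotientMap_mk).continuous_comp_iff.mp ?_
        exact continuous_relLoopExtend.comp
          (((continuous_subtype_val.comp continuous_fst).subtype_mk fun p => p.1.2.2).prodMk
            (continuous_const.mul continuous_snd)) }

variable {τ}

theorem relLoopToCircle_apply_coe (γ : {γ : C(I, X) // IsRelLoopIn τ.ker g γ}) (x : ℝ) :
    relLoopToCircle τ hg hr γ x = relLoopExtend g γ (r * x) :=
  rfl

theorem isTwistedLoop_relLoopToCircle
    (hrange : τ.range = Subgroup.zpowers (τ g)) (γ : {γ : C(I, X) // IsRelLoopIn τ.ker g γ}) :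
    IsTwistedLoop τ (relLoopToCircle τ hg hr γ) := by
  intro h t
  obtain ⟨m, k, hk, rfl⟩ := exists_mem_ker_mul_zpow_of_range_eq_zpowers hrange h
  obtain ⟨x, rfl⟩ := QuotientAddGroup.mk_surjective t
  calc (k * g ^ m) • relLoopToCircle τ hg hr γ x
      = k • relLoopExtend g γ (r * x + m) := by
        rw [mul_smul, relLoopToCircle_apply_coe, relLoopExtend_add_intCast]
    _ = relLoopExtend g γ (r * (x + m / r)) := by
        rw [smul_relLoopExtend_of_mem γ.2.1 hk, mul_add, mul_div_cancel₀ _ (Nat.cast_ne_zero.2 hr)]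
    _ = relLoopToCircle τ hg hr γ (x + Multiplicative.toAdd (τ (k * g ^ m))) := by
        rw [map_mul, MonoidHom.mem_ker.1 hk, one_mul, toAdd_map_zpow_of_eq_ofAdd_inv hg,
          ← AddCircle.coe_add, relLoopToCircle_apply_coe]

theorem relLoopToCircle_comp_scaledArc (γ : {γ : C(I, X) // IsRelLoopIn τ.ker g γ}) :
    (relLoopToCircle τ hg hr γ).comp (scaledArc r) = γ := by
  ext s
  change relLoopToCircle τ hg hr γ (s / r : ℝ) = γ.1 s
  rw [relLoopToCircle_apply_coe, mul_div_cancel₀ _ (Nat.cast_ne_zero.2 hr),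
    relLoopExtend_coe γ.2.2]

theorem IsTwistedLoop.relLoopToCircle_comp_scaledArc {u : C(AddCircle (1 : ℝ), X)}
    (hu : IsTwistedLoop τ u) :
    relLoopToCircle τ hg hr ⟨u.comp (scaledArc r), hu.isRelLoopIn_comp_scaledArc hg⟩ = u := by
  ext t
  obtain ⟨x, rfl⟩ := QuotientAddGroup.mk_surjective t
  set n := ⌊(r : ℝ) * x⌋
  rw [relLoopToCircle_apply_coe, relLoopExtend_eq_of_mem_Icc (hu.isRelLoopIn_comp_scaledArc hg).2
    (n := n) ⟨Int.floor_le _, (Int.lt_floor_add_one _).le⟩]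
  have hmem : (r : ℝ) * x - n ∈ Icc (0 : ℝ) 1 :=
    ⟨sub_nonneg.2 (Int.floor_le _), by linarith [Int.lt_floor_add_one ((r : ℝ) * x)]⟩
  change g ^ n • u (((projIcc 0 1 zero_le_one ((r : ℝ) * x - n) : ℝ) / r : ℝ)) = u x
  rw [projIcc_of_mem _ hmem, hu, toAdd_map_zpow_of_eq_ofAdd_inv hg, ← AddCircle.coe_add, ← add_div,
    sub_add_cancel, mul_div_cancel_left₀ _ (Nat.cast_ne_zero.2 hr)]

def twistedLoopHomeomorph (hrange : τ.range = Subgroup.zpowers (τ g)) :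
    {u : C(AddCircle (1 : ℝ), X) // IsTwistedLoop τ u} ≃ₜ
      {γ : C(I, X) // IsRelLoopIn τ.ker g γ} where
  toFun u := ⟨u.1.comp (scaledArc r), u.2.isRelLoopIn_comp_scaledArc hg⟩
  invFun γ := ⟨relLoopToCircle τ hg hr γ, isTwistedLoop_relLoopToCircle hg hr hrange γ⟩
  left_inv u := Subtype.ext (u.2.relLoopToCircle_comp_scaledArc hg hr)
  right_inv γ := Subtype.ext (relLoopToCircle_comp_scaledArc hg hr γ)
  continuous_toFun :=
    ((ContinuousMap.continuous_precomp _).comp continuous_subtype_val).subtype_mk _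
  continuous_invFun := (relLoopToCircle τ hg hr).continuous.subtype_mk _

end TwistedLoops

end

/-- Let `Γ` act continuously on `X`, let `G ≤ Γ` and let `τ : G → S¹` be a
homomorphism whose image is the cyclic group of order `r` generated by `1/r`, with kernel `K`.
Then every loop `u` with symmetry `G_τ` takes values in `X^K`, and `u ↦ (t ↦ u(t/r))` is a
homeomorphism from `Fix(G_τ, ΛX)` onto the space `Λ^g X^K` of relative loops in `X^K` with
phase `g`, for any `g ∈ G` with `τ(g) = 1/r`. -/
theorem statement_15 {X : Type*} [TopologicalSpace X]
    {Γ : Type*} [Group Γ] [MulAction Γ X]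
    (hcont : ∀ γ : Γ, Continuous fun x : X => γ • x)
    (G : Subgroup Γ) (τ : G →* Multiplicative (AddCircle (1 : ℝ)))
    (r : ℕ) (hr : 1 ≤ r)
    (hrange : τ.range =
      Subgroup.zpowers (Multiplicative.ofAdd ((1 / (r : ℝ) : ℝ) : AddCircle (1 : ℝ))))
    (g : G) (hg : τ g = Multiplicative.ofAdd ((1 / (r : ℝ) : ℝ) : AddCircle (1 : ℝ))) :
    (∀ u : C(AddCircle (1 : ℝ), X),
      (∀ (h : G) (t : AddCircle (1 : ℝ)),
        (h : Γ) • u t = u (t + Multiplicative.toAdd (τ h))) →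
      ∀ (t : AddCircle (1 : ℝ)) (k : G), k ∈ τ.ker → (k : Γ) • u t = u t) ∧
    ∃ Φ : {u : C(AddCircle (1 : ℝ), X) //
            ∀ (h : G) (t : AddCircle (1 : ℝ)),
              (h : Γ) • u t = u (t + Multiplicative.toAdd (τ h))} ≃ₜ
          {γ : C(unitInterval, X) //
            (∀ (s : unitInterval) (k : G), k ∈ τ.ker → (k : Γ) • γ s = γ s) ∧
            γ 1 = (g : Γ) • γ 0},
      ∀ u (t : unitInterval),
        (Φ u : C(unitInterval, X)) t
          = (u : C(AddCircle (1 : ℝ), X)) ((((t : ℝ) / r : ℝ) : AddCircle (1 : ℝ))) := by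
  have : ContinuousConstSMul G X := ⟨fun h => hcont h⟩
  have hr0 : r ≠ 0 := Nat.one_le_iff_ne_zero.1 hr
  rw [← hg] at hrange
  exact ⟨fun u hu t k hk => IsTwistedLoop.smul_eq_of_mem_ker hu t hk,
    twistedLoopHomeomorph hg hr0 hrange, fun _ _ => rfl⟩
end

section
/- Let z : ℝ → ℂ∖{0} be a continuous 1-periodic function satisfying conj(z(t)) = z(t + 1/2) for all t. Then the winding number of z about the origin is zero: for every continuous function θ : ℝ → ℝ with z(t) = |z(t)| · e^{2πiθ(t)} for all t, one has θ(1) = θ(0). (Hence a choreography of symmetry type C'(n,2) which does not pass through the origin has winding number 0 about the barycentre.) -/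
/-!
Writing `z t = ‖z t‖ e^{2πiθ(t)}`, the symmetry `conj (z t) = z (t + 1/2)` forces
`e^{2πiθ(t + 1/2)} = e^{-2πiθ(t)}`, so `θ t + θ (t + 1/2)` is a continuous integer-valued
function, hence constant. Comparing its values at `0` and `1/2` gives `θ 0 = θ 1`.
-/

noncomputable section

open Complex

open Real ComplexConjugate

theorem PreconnectedSpace.eq_of_forall_exists_eq_intCast {X : Type*} [TopologicalSpace X]
    [PreconnectedSpace X] {f : X → ℝ} (hf : Continuous f) (hint : ∀ x, ∃ n : ℤ, f x = n)
    (x y : X) : f x = f y := by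
  choose n hn using hint
  have hfn : f = (↑) ∘ n := funext hn
  have hn_cont : Continuous n :=
    Int.isClosedEmbedding_coe_real.continuous_iff.mpr (hfn ▸ hf)
  rw [hfn, Function.comp_apply, Function.comp_apply, PreconnectedSpace.constant ‹_› hn_cont]

theorem Complex.exp_two_pi_I_mul_ofReal_eq_one_iff (x : ℝ) :
    exp (2 * π * I * x) = 1 ↔ ∃ n : ℤ, x = n := by
  have h2πI : 2 * π * I ≠ 0 := by simp [pi_ne_zero, I_ne_zero]
  rw [exp_eq_one_iff]
  refine exists_congr fun n => ?_
  rw [mul_comm _ (x : ℂ), mul_left_inj' h2πI]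
  exact_mod_cast Iff.rfl

theorem Complex.exists_int_add_eq_of_conj_polar {w : ℂ} {a b : ℝ} (hw : w ≠ 0)
    (ha : w = ‖w‖ * exp (2 * π * I * a)) (hb : conj w = ‖w‖ * exp (2 * π * I * b)) :
    ∃ n : ℤ, a + b = n := by
  have hconj : conj w = ‖w‖ * exp (-(2 * π * I * a)) := by
    conv_lhs => rw [ha]
    rw [map_mul, conj_ofReal, ← exp_conj]
    simp only [map_mul, conj_ofReal, conj_I, map_ofNat]
    ring_nf
  have hexp : exp (2 * π * I * b) = exp (-(2 * π * I * a)) :=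
    mul_left_cancel₀ (by simpa using hw) (hb.symm.trans hconj)
  rw [← exp_two_pi_I_mul_ofReal_eq_one_iff, ofReal_add, mul_add, exp_add, hexp, ← exp_add, add_neg_cancel, exp_zero]

theorem statement_18_general (z : ℝ → ℂ) (h0 : ∀ t, z t ≠ 0)
    (hsym : ∀ t, (starRingEnd ℂ) (z t) = z (t + 1 / 2))
    (θ : ℝ → ℝ) (hθ : Continuous θ)
    (hlift : ∀ t, z t = ((‖z t‖ : ℝ) : ℂ) *
      Complex.exp (2 * (Real.pi : ℂ) * Complex.I * ((θ t : ℝ) : ℂ))) :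
    θ 1 = θ 0 := by
  have hint : ∀ t, ∃ n : ℤ, θ t + θ (t + 1 / 2) = n := fun t =>
    exists_int_add_eq_of_conj_polar (h0 t) (hlift t)
      (by rw [hsym, ← norm_conj, hsym]; exact hlift (t + 1 / 2))
  have hconst := PreconnectedSpace.eq_of_forall_exists_eq_intCast
    (hθ.add (hθ.comp (continuous_add_const (1 / 2)))) hint 0 (1 / 2)
  norm_num at hconst
  linarith

/-- A continuous `1`-periodic non-vanishing curve `z` with the symmetry
`conj (z t) = z (t + 1/2)` (of a choreography of type `C'(n,2)` avoiding the origin) has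
winding number `0` about the origin. -/
theorem statement_18 (z : ℝ → ℂ) (hz : Continuous z) (h0 : ∀ t, z t ≠ 0)
    (hper : ∀ t, z (t + 1) = z t)
    (hsym : ∀ t, (starRingEnd ℂ) (z t) = z (t + 1 / 2))
    (θ : ℝ → ℝ) (hθ : Continuous θ)
    (hlift : ∀ t, z t = ((‖z t‖ : ℝ) : ℂ) *
      Complex.exp (2 * (Real.pi : ℂ) * Complex.I * ((θ t : ℝ) : ℂ))) :
    θ 1 = θ 0 :=
  statement_18_general z h0 hsym θ hθ hlift

end
end
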